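/- arXiv:2101.09382 — 2 statements merged into one kernel-verified Lean document; each statement's English description precedes it below -/
import Mathlib

section
/- Critical-path polynomial expansion: for every structure function φ on n components, every index i, and every real p, one has h(1_i,(p,…,p)) − h(0_i,(p,…,p)) = Σ_{r=1}^{n} n_r(i) · p^{r−1} (1−p)^{n−r}, where (p,…,p) is the constant vector. -/
/-- The reliability function (multilinear extension) of a structure function φ. -/
def rel (n : ℕ) (φ : (Fin n → Bool) → Bool) (p : Fin n → ℝ) : ℝ :=
  ∑ x : Fin n → Bool,
    (∏ j : Fin n, if x j then p j else 1 - p j) * (if φ x then 1 else 0)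

/-- The number `n_r(i)` of critical path vectors of size `r` for component `i`:
the sum, over all configurations of the coordinates other than `i` (encoded as
state vectors with `x i = false`) having exactly `r−1` working components among
the coordinates `j ≠ i`, of `φ(1_i,x) − φ(0_i,x)`. -/
def ncrit (n : ℕ) (φ : (Fin n → Bool) → Bool) (i : Fin n) (r : ℕ) : ℤ :=
  ∑ x ∈ Finset.univ.filter (fun x : Fin n → Bool =>
      x i = false ∧
        (Finset.univ.filter (fun j : Fin n => j ≠ i ∧ x j = true)).card = r - 1),
    ((if φ (Function.update x i true) then (1 : ℤ) else 0)
      - (if φ (Function.update x i false) then (1 : ℤ) else 0))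

/-!
Setting `p i` to `1` (resp. `0`) kills the weight of every state vector whose `i`-th coordinate is
`false` (resp. `true`) and leaves the others with the weight of their remaining coordinates, which
for the constant vector is `p ^ k * (1 - p) ^ (n - 1 - k)`, `k` the number of other working
components. So both reliabilities are sums over the configurations of the other coordinates with
these weights, and grouping their difference by `r = k + 1` gives the expansion.
-/

open Finset Function

section StateProb

variable {ι : Type*}

def stateProb (p : ι → ℝ) (s : Finset ι) (x : ι → Bool) : ℝ :=
  ∏ j ∈ s, if x j then p j else 1 - p j

lemma stateProb_update_prob_of_notMem [DecidableEq ι] {s : Finset ι} {i : ι} (hi : i ∉ s)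
    (p : ι → ℝ) (v : ℝ) (x : ι → Bool) : stateProb (update p i v) s x = stateProb p s x :=
  prod_congr rfl fun j hj => by rw [update_of_ne (ne_of_mem_of_not_mem hj hi)]

lemma stateProb_update_state_of_notMem [DecidableEq ι] {s : Finset ι} {i : ι} (hi : i ∉ s)
    (p : ι → ℝ) (x : ι → Bool) (b : Bool) : stateProb p s (update x i b) = stateProb p s x :=
  prod_congr rfl fun j hj => by rw [update_of_ne (ne_of_mem_of_not_mem hj hi)]

lemma stateProb_update_indicator [Fintype ι] [DecidableEq ι] (p : ι → ℝ) (i : ι) (b : Bool)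
    (x : ι → Bool) :
    stateProb (update p i (if b then 1 else 0)) univ x
      = if x i = b then stateProb p (univ.erase i) x else 0 := by
  rw [stateProb, ← mul_prod_erase univ _ (mem_univ i), update_self, ← stateProb,
    stateProb_update_prob_of_notMem (notMem_erase i univ)]
  cases b <;> cases x i <;> simp

lemma stateProb_const (p : ℝ) (s : Finset ι) (x : ι → Bool) :
    stateProb (fun _ => p) s x
      = p ^ #(s.filter fun j => x j = true) * (1 - p) ^ (#s - #(s.filter fun j => x j = true)) := by
  rw [stateProb, prod_ite, prod_const, prod_const,
    ← card_filter_add_card_filter_not (s := s) (fun j => x j = true), Nat.add_sub_cancel_left]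

end StateProb

lemma sum_filter_apply_eq_sum_filter_update {ι β M : Type*} [Fintype ι] [DecidableEq ι]
    [Fintype β] [DecidableEq β] [AddCommMonoid M] (f : (ι → β) → M) (i : ι) (b c : β) :
    ∑ x ∈ univ.filter (fun x => x i = b), f x
      = ∑ x ∈ univ.filter (fun x => x i = c), f (update x i b) := by
  refine sum_nbij' (fun x => update x i c) (fun x => update x i b) ?_ ?_ ?_ ?_ ?_ <;>
    intro x hx <;> simp only [mem_filter, mem_univ, true_and] at hx ⊢
  all_goals first
    | exact update_self i _ x
    | rw [update_idem, ← hx, update_eq_self]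

def numWorkingExcept {n : ℕ} (i : Fin n) (x : Fin n → Bool) : ℕ :=
  #(univ.filter fun j => j ≠ i ∧ x j = true)

lemma rel_update_indicator (n : ℕ) (φ : (Fin n → Bool) → Bool) (p : Fin n → ℝ) (i : Fin n)
    (b : Bool) :
    rel n φ (update p i (if b then 1 else 0))
      = ∑ x ∈ univ.filter (fun x => x i = false),
          stateProb p (univ.erase i) x * (if φ (update x i b) then 1 else 0) := by
  calc rel n φ (update p i (if b then 1 else 0))
      = ∑ x, if x i = b then stateProb p (univ.erase i) x * (if φ x then 1 else 0) else 0 := by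
        refine sum_congr rfl fun x _ => ?_
        rw [← stateProb, stateProb_update_indicator, ite_mul, zero_mul]
    _ = ∑ x ∈ univ.filter (fun x => x i = b),
          stateProb p (univ.erase i) x * (if φ x then 1 else 0) := (sum_filter _ _).symm
    _ = _ := by
        rw [sum_filter_apply_eq_sum_filter_update _ i b false]
        refine sum_congr rfl fun x _ => ?_
        rw [stateProb_update_state_of_notMem (notMem_erase i univ)]

lemma stateProb_const_erase {n : ℕ} (p : ℝ) (i : Fin n) (x : Fin n → Bool) :
    stateProb (fun _ => p) (univ.erase i) x
      = p ^ numWorkingExcept i x * (1 - p) ^ (n - 1 - numWorkingExcept i x) := by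
  rw [stateProb_const, card_erase_of_mem (mem_univ i), card_univ, Fintype.card_fin, filter_erase]
  have : (univ.filter fun j => x j = true).erase i = univ.filter fun j => j ≠ i ∧ x j = true := by
    ext j; simp [and_comm]
  rw [this, numWorkingExcept, Nat.sub_right_comm]

lemma numWorkingExcept_lt {n : ℕ} (i : Fin n) (x : Fin n → Bool) : numWorkingExcept i x < n :=
  calc numWorkingExcept i x ≤ #(univ.erase i) := card_le_card fun j => by simp +contextual
    _ < #(univ : Finset (Fin n)) := card_erase_lt_of_mem (mem_univ i)
    _ = n := card_fin n

/-- Critical-path polynomial expansion: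
`h(1_i,(p,…,p)) − h(0_i,(p,…,p)) = Σ_{r=1}^{n} n_r(i) · p^{r−1} (1−p)^{n−r}`. -/
theorem critical_path_expansion (n : ℕ) (φ : (Fin n → Bool) → Bool) (i : Fin n)
    (p : ℝ) :
    rel n φ (Function.update (fun _ => p) i 1)
        - rel n φ (Function.update (fun _ => p) i 0)
      = ∑ r ∈ Finset.Icc 1 n,
          (ncrit n φ i r : ℝ) * p ^ (r - 1) * (1 - p) ^ (n - r) := by
  have rel_one := rel_update_indicator n φ (fun _ => p) i true
  have rel_zero := rel_update_indicator n φ (fun _ => p) i false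
  simp only [if_true, Bool.false_eq_true, if_false] at rel_one rel_zero
  rw [rel_one, rel_zero, ← sum_sub_distrib, ← sum_fiberwise_of_maps_to
    (g := fun x => numWorkingExcept i x + 1) (t := Icc 1 n)
    fun x _ => mem_Icc.2 ⟨Nat.le_add_left 1 _, numWorkingExcept_lt i x⟩]
  refine sum_congr rfl fun r hr => ?_
  have hr := mem_Icc.1 hr
  rw [filter_filter, ncrit, Int.cast_sum, sum_mul, sum_mul]
  refine sum_congr (filter_congr fun x _ => ?_) fun x hx => ?_
  · exact and_congr_right fun _ => by rw [numWorkingExcept]; omega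
  · obtain ⟨-, hk⟩ := (mem_filter.1 hx).2
    rw [stateProb_const_erase, numWorkingExcept, hk, show n - 1 - (r - 1) = n - r by omega]
    push_cast
    ring
end

section
/- A series component has maximal structural Birnbaum importance: let φ be a structure function on n components such that φ(x) = x_k ∧ ψ(x) for some component k and some map ψ : {0,1}^n → {0,1} that does not depend on the k-th coordinate. Then for every component i, the structural Birnbaum importance satisfies 2^{−n} Σ_{x ∈ {0,1}^n} δ_i(x) ≤ 2^{−n} Σ_{x ∈ {0,1}^n} δ_k(x), i.e. ∂h/∂p_i ≤ ∂h/∂p_k at p = (1/2, …, 1/2). -/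
/-!
Write `[ψ]` for the 0/1-indicator of `ψ`. Then `δ_k = [ψ]`, while for `i ≠ k` one has
`δ_i(x) = x_k · δ^ψ_i(x)` with `δ^ψ_i` independent of `x_k`, so summing over `x_k` halves it:
`2 Σ δ_i = Σ δ^ψ_i`. Finally `δ^ψ_i(x) ≤ [ψ](1_i,x) + [ψ](0_i,x)`, and the right-hand side sums
to `2 Σ [ψ] = 2 Σ δ_k`.
-/

/-- The pivotal difference δ_i(x) = φ(1_i,x) − φ(0_i,x), computed in ℤ. -/
def delta (n : ℕ) (φ : (Fin n → Bool) → Bool) (i : Fin n) (x : Fin n → Bool) : ℤ :=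
  (if φ (Function.update x i true) then 1 else 0)
    - (if φ (Function.update x i false) then 1 else 0)

open Function

section BooleanCube

variable {ι M : Type*} [Fintype ι] [DecidableEq ι] [AddCommMonoid M]

def flipAt (i : ι) : Equiv.Perm (ι → Bool) :=
  Involutive.toPerm (fun x => update x i (!(x i))) fun x => by
    ext j
    by_cases h : j = i
    · subst h; simp
    · simp [update_of_ne h]

theorem sum_update_true_add_update_false (f : (ι → Bool) → M) (i : ι) :
    ∑ x, (f (update x i true) + f (update x i false)) = 2 • ∑ x, f x := by
  -- `{(1_i,x), (0_i,x)} = {x, flipAt i x}`, and `flipAt i` is a bijection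
  have hpair : ∀ x, f (update x i true) + f (update x i false) = f x + f (flipAt i x) := by
    intro x
    have hflip : flipAt i x = update x i (!(x i)) := rfl
    cases hx : x i
    · rw [add_comm, ← hx, update_eq_self, hflip, hx]; rfl
    · rw [← hx, update_eq_self, hflip, hx]; rfl
  rw [Finset.sum_congr rfl fun x _ => hpair x, Finset.sum_add_distrib, Equiv.sum_comp, two_nsmul]

theorem two_nsmul_sum_ite_eq_sum {k : ι} (g : (ι → Bool) → M)
    (hg : ∀ x b, g (update x k b) = g x) :
    2 • ∑ x, (if x k then g x else 0) = ∑ x, g x := by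
  rw [← sum_update_true_add_update_false _ k]
  exact Finset.sum_congr rfl fun x _ => by simp [hg]

end BooleanCube

section Delta

variable {n : ℕ}

theorem delta_le_ite_add_ite (ψ : (Fin n → Bool) → Bool) (i : Fin n) (x : Fin n → Bool) :
    delta n ψ i x ≤
      (if ψ (update x i true) then 1 else 0) + (if ψ (update x i false) then 1 else 0) := by
  unfold delta
  split_ifs <;> norm_num

theorem sum_delta_le_two_mul (ψ : (Fin n → Bool) → Bool) (i : Fin n) :
    ∑ x, delta n ψ i x ≤ 2 * ∑ x, (if ψ x then 1 else 0 : ℤ) := by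
  calc ∑ x, delta n ψ i x
      ≤ ∑ x, ((if ψ (update x i true) then 1 else 0) + (if ψ (update x i false) then 1 else 0)) :=
        Finset.sum_le_sum fun x _ => delta_le_ite_add_ite ψ i x
    _ = 2 * ∑ x, (if ψ x then 1 else 0 : ℤ) := by
        rw [sum_update_true_add_update_false (fun x => if ψ x then (1 : ℤ) else 0), two_nsmul,
          two_mul]

variable {φ ψ : (Fin n → Bool) → Bool} {k : Fin n}

theorem delta_update_of_ne (hψ : ∀ x b, ψ (update x k b) = ψ x) {i : Fin n} (hik : i ≠ k)
    (x : Fin n → Bool) (b : Bool) : delta n ψ i (update x k b) = delta n ψ i x := by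
  simp only [delta, update_comm hik.symm, hψ]

theorem delta_series_self (hφ : ∀ x, φ x = (x k && ψ x)) (hψ : ∀ x b, ψ (update x k b) = ψ x)
    (x : Fin n → Bool) : delta n φ k x = if ψ x then 1 else 0 := by
  simp [delta, hφ, hψ]

theorem delta_series_of_ne (hφ : ∀ x, φ x = (x k && ψ x)) {i : Fin n} (hik : i ≠ k)
    (x : Fin n → Bool) : delta n φ i x = if x k then delta n ψ i x else 0 := by
  simp only [delta, hφ, update_of_ne hik.symm]
  cases x k <;> simp

theorem sum_delta_series_le (hφ : ∀ x, φ x = (x k && ψ x))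
    (hψ : ∀ x b, ψ (update x k b) = ψ x) (i : Fin n) :
    ∑ x, delta n φ i x ≤ ∑ x, delta n φ k x := by
  rcases eq_or_ne i k with rfl | hik
  · exact le_rfl
  have halve : 2 * ∑ x, delta n φ i x = ∑ x, delta n ψ i x := by
    simp only [delta_series_of_ne hφ hik]
    rw [two_mul, ← two_nsmul, two_nsmul_sum_ite_eq_sum _ (delta_update_of_ne hψ hik)]
  have hk : ∑ x, delta n φ k x = ∑ x, (if ψ x then 1 else 0 : ℤ) := by
    simp only [delta_series_self hφ hψ]
  linarith [sum_delta_le_two_mul ψ i]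

end Delta

/-- A series component has maximal structural Birnbaum importance: if
`φ(x) = x_k ∧ ψ(x)` where ψ does not depend on the k-th coordinate, then for
every component i the structural Birnbaum importance
`2^{−n} Σ_x δ_i(x)` is at most `2^{−n} Σ_x δ_k(x)`. -/
theorem series_component_max_importance (n : ℕ)
    (φ ψ : (Fin n → Bool) → Bool) (k : Fin n)
    (hφ : ∀ x, φ x = (x k && ψ x))
    (hψ : ∀ (x : Fin n → Bool) (b : Bool), ψ (Function.update x k b) = ψ x) :
    ∀ i : Fin n,
      ((2 : ℝ) ^ n)⁻¹ * ∑ x : Fin n → Bool, (delta n φ i x : ℝ)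
        ≤ ((2 : ℝ) ^ n)⁻¹ * ∑ x : Fin n → Bool, (delta n φ k x : ℝ) := by
  intro i
  exact mul_le_mul_of_nonneg_left (by exact_mod_cast sum_delta_series_le hφ hψ i) (by positivity)
end
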